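/- arXiv:1903.06307 — 2 statements merged into one kernel-verified Lean document; each statement's English description precedes it below -/
import Mathlib

section
/- Let g : ℕ and d : Fin g → ℕ with 1 ≤ d i for all i, K := ∏ᵢ ZMod (2·d i), Z₂ := {x ∈ K : 2·x = 0}, D := {2·x : x ∈ K}, Z₂' := Z₂ ∩ D, and s := #{i : d i odd}. Then the quotient group D / Z₂' has exactly (∏ᵢ d i) / 2^(g−s) elements. -/
/-!
Doubling maps `D = 2K` onto `4K` with kernel `Z₂ ∩ D`, so `D ⧸ Z₂' ≅ 4K`. Coordinatewise,
the multiples of `4` in `ZMod (2d)` form a subgroup of order `2d / gcd(2d, 4) = d / gcd(d, 2)`,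
which is `d` for odd `d` and `d / 2` for even `d`.
-/

open Finset

def doubleHom (K : Type*) [AddCommGroup K] : K →+ K where
  toFun x := 2 • x
  map_zero' := smul_zero 2
  map_add' x y := smul_add 2 x y

theorem AddMonoidHom.card_range_quotient_ker_inf_range {G H K : Type*} [AddGroup G]
    [AddGroup H] [AddGroup K] (ψ : G →+ H) (φ : H →+ K) :
    Nat.card (ψ.range ⧸ (φ.ker ⊓ ψ.range).addSubgroupOf ψ.range) =
      Nat.card (φ.comp ψ).range := by
  rw [AddSubgroup.inf_addSubgroupOf_right, ← AddMonoidHom.map_range, ← AddSubgroup.relIndex_ker]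
  rfl

theorem Pi.card_range_nsmul {ι : Type*} [Fintype ι] {G : ι → Type*} [∀ i, AddMonoid (G i)]
    (n : ℕ) :
    Nat.card (Set.range fun x : ∀ i, G i => n • x) =
      ∏ i, Nat.card (Set.range fun x : G i => n • x) := by
  rw [show (fun x : ∀ i, G i => n • x) = Pi.map fun i (y : G i) => n • y from rfl,
    Set.range_piMap, Nat.card_congr (Equiv.Set.univPi _), Nat.card_pi]

theorem ZMod.range_nsmul (m n : ℕ) :
    Set.range (fun x : ZMod m => n • x) = AddSubgroup.zmultiples (n : ZMod m) := by
  rw [AddSubgroup.coe_zmultiples, ← ZMod.intCast_surjective.range_comp]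
  congr 1
  ext k
  simp [nsmul_eq_mul, zsmul_eq_mul, mul_comm]

theorem ZMod.card_range_nsmul (m : ℕ) {n : ℕ} (hn : n ≠ 0) :
    Nat.card (Set.range fun x : ZMod m => n • x) = m / m.gcd n := by
  rw [ZMod.range_nsmul, SetLike.coe_sort_coe, Nat.card_zmultiples, ZMod.addOrderOf_coe' m hn]

theorem Nat.two_mul_div_gcd_four (d : ℕ) : 2 * d / (2 * d).gcd 4 = d / d.gcd 2 := by
  rw [show (4 : ℕ) = 2 * 2 from rfl, Nat.gcd_mul_left, Nat.mul_div_mul_left _ _ two_pos]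

theorem Nat.gcd_two_right_eq_ite (d : ℕ) : d.gcd 2 = if Odd d then 1 else 2 := by
  split_ifs with hd
  · exact Nat.coprime_two_right.mpr hd
  · exact Nat.gcd_eq_right (Nat.not_odd_iff_even.mp hd).two_dvd

theorem Finset.prod_gcd_two {ι : Type*} [Fintype ι] (d : ι → ℕ) :
    ∏ i, (d i).gcd 2 = 2 ^ (Fintype.card ι - #{i | Odd (d i)}) := by
  rw [prod_congr rfl fun i _ => Nat.gcd_two_right_eq_ite (d i), prod_ite, prod_const_one,
    one_mul, prod_const, ← card_univ,
    ← card_filter_add_card_filter_not (s := univ) (Odd <| d ·), Nat.add_sub_cancel_left]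

theorem Finset.prod_div_gcd_two {ι : Type*} [Fintype ι] (d : ι → ℕ) :
    ∏ i, d i / (d i).gcd 2 = (∏ i, d i) / 2 ^ (Fintype.card ι - #{i | Odd (d i)}) := by
  rw [← prod_gcd_two]
  refine (Nat.div_eq_of_eq_mul_left
    (prod_pos fun i _ => Nat.gcd_pos_of_pos_right _ two_pos) ?_).symm
  rw [← prod_mul_distrib]
  exact prod_congr rfl fun i _ => (Nat.div_mul_cancel (Nat.gcd_dvd_left _ _)).symm

theorem coe_doubleHom_comp_doubleHom (K : Type*) [AddCommGroup K] :
    ⇑((doubleHom K).comp (doubleHom K)) = fun x => 4 • x := by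
  ext x
  simp [doubleHom, smul_smul]

theorem card_quotient_doubles_by_inter_general (g : ℕ) (d : Fin g → ℕ) :
    Nat.card
        ((doubleHom (∀ i, ZMod (2 * d i))).range ⧸
          (((doubleHom (∀ i, ZMod (2 * d i))).ker ⊓
              (doubleHom (∀ i, ZMod (2 * d i))).range).addSubgroupOf
            (doubleHom (∀ i, ZMod (2 * d i))).range))
      = (∏ i, d i) / 2 ^ (g - (Finset.univ.filter fun i => Odd (d i)).card) := by
  rw [AddMonoidHom.card_range_quotient_ker_inf_range, ← SetLike.coe_sort_coe,
    AddMonoidHom.coe_range, coe_doubleHom_comp_doubleHom, Pi.card_range_nsmul]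
  simp only [ZMod.card_range_nsmul _ four_ne_zero, Nat.two_mul_div_gcd_four, prod_div_gcd_two,
    Fintype.card_fin]

/-- For `K := ∏ i, ZMod (2·d i)` with all `d i ≥ 1`, letting `Z₂` be the 2-torsion
subgroup, `D` the subgroup of doubles, `Z₂' := Z₂ ∩ D`, and `s` the number of odd
`d i`, the quotient `D ⧸ Z₂'` has exactly `(∏ i, d i) / 2^(g-s)` elements. -/
theorem card_quotient_doubles_by_inter (g : ℕ) (d : Fin g → ℕ) (hd : ∀ i, 1 ≤ d i) :
    Nat.card
        ((doubleHom (∀ i, ZMod (2 * d i))).range ⧸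
          (((doubleHom (∀ i, ZMod (2 * d i))).ker ⊓
              (doubleHom (∀ i, ZMod (2 * d i))).range).addSubgroupOf
            (doubleHom (∀ i, ZMod (2 * d i))).range))
      = (∏ i, d i) / 2 ^ (g - (Finset.univ.filter fun i => Odd (d i)).card) :=
  card_quotient_doubles_by_inter_general g d
end

section
/- Let G be an additive abelian group and let Z' ⊆ Z ⊆ G and W ⊆ Z be finite subgroups such that every element of Z satisfies 2·z = 0 and every t ∈ Z can be written uniquely as t = z' + w with z' ∈ Z' and w ∈ W (W is a complement of Z' in Z). Let ρ : Z' → ℂ be a character (ρ(z+z') = ρ(z)·ρ(z'), ρ(0) = 1). Let N be a complex vector space, b : G → N and c : G → ℂ functions, and P : G × G → N a function satisfying the multiplication formula: for all y₁, y₂ ∈ G, P(y₁+y₂, y₁−y₂) = Σ_{t ∈ Z} c(y₂+t) • b(y₁+t). Then for all y₁, y₂ ∈ G: Σ_{z ∈ Z'} ρ(z) • P(y₁+y₂+z, y₁−y₂+z) = Σ_{w ∈ W} C(y₂,w,ρ) • Θ(y₁,w,ρ), where C(t,w,ρ) := Σ_{z' ∈ Z'} ρ(z')·c(t+w+z') ∈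 ℂ and Θ(y,w,ρ) := Σ_{z ∈ Z'} ρ(z) • b(y+w+z) ∈ N. -/
/-- The block formula for the multiplication map on character combinations of theta
functions: if `P(y₁+y₂, y₁−y₂) = Σ_{t ∈ Z} c(y₂+t) • b(y₁+t)`, `Z` is a finite
2-torsion subgroup, and `Z = Z' ⊕ W`, then for every character `ρ` of `Z'`,
`Σ_{z ∈ Z'} ρ(z) • P(y₁+y₂+z, y₁−y₂+z) = Σ_{w ∈ W} C(y₂,w,ρ) • Θ(y₁,w,ρ)`
where `C(t,w,ρ) = Σ_{z' ∈ Z'} ρ(z')·c(t+w+z')` and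
`Θ(y,w,ρ) = Σ_{z ∈ Z'} ρ(z) • b(y+w+z)`. -/
theorem theta_multiplication_block_formula
    (G : Type*) [AddCommGroup G]
    (Z Z' W : AddSubgroup G) [Fintype Z] [Fintype Z'] [Fintype W]
    (hZ'Z : Z' ≤ Z) (hWZ : W ≤ Z)
    (h2 : ∀ z ∈ Z, 2 • z = 0)
    (hcompl : ∀ t ∈ Z, ∃! p : Z' × W, (p.1 : G) + (p.2 : G) = t)
    (ρ : Z' → ℂ)
    (hρmul : ∀ z z' : Z', ρ (z + z') = ρ z * ρ z') (hρ0 : ρ 0 = 1)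
    (N : Type*) [AddCommGroup N] [Module ℂ N]
    (b : G → N) (c : G → ℂ) (P : G × G → N)
    (hP : ∀ y₁ y₂ : G, P (y₁ + y₂, y₁ - y₂) = ∑ t : Z, c (y₂ + t) • b (y₁ + t)) :
    ∀ y₁ y₂ : G,
      ∑ z : Z', ρ z • P (y₁ + y₂ + z, y₁ - y₂ + z)
        = ∑ w : W, (∑ z' : Z', ρ z' * c (y₂ + w + z')) •
            (∑ z : Z', ρ z • b (y₁ + w + z)) := by
  intro y₁ y₂
  classical
  set e : Z' × W → Z := fun p =>
    ⟨(p.1 : G) + (p.2 : G), Z.add_mem (hZ'Z p.1.2) (hWZ p.2.2)⟩ with he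
  have hbij : Function.Bijective e := by
    constructor
    · intro p q h
      obtain ⟨r, hr, hu⟩ := hcompl ((p.1 : G) + p.2) (Z.add_mem (hZ'Z p.1.2) (hWZ p.2.2))
      have hp : p = r := hu p rfl
      have hq : q = r := hu q (by
        have h' := congrArg (Subtype.val) h
        simpa [he] using h'.symm)
      rw [hp, hq]
    · intro t
      obtain ⟨p, hp, -⟩ := hcompl (t : G) t.2
      exact ⟨p, Subtype.ext hp⟩
  have key : ∀ z : G, P (y₁ + y₂ + z, y₁ - y₂ + z)
      = ∑ t : Z, c (y₂ + t) • b (y₁ + z + t) := by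
    intro z
    have h := hP (y₁ + z) y₂
    rw [show y₁ + z + y₂ = y₁ + y₂ + z by abel,
        show y₁ + z - y₂ = y₁ - y₂ + z by abel] at h
    exact h
  calc ∑ z : Z', ρ z • P (y₁ + y₂ + z, y₁ - y₂ + z)
      = ∑ z : Z', ∑ p : Z' × W,
          ρ z • (c (y₂ + ((p.1 : G) + p.2)) • b (y₁ + z + ((p.1 : G) + p.2))) := by
        refine Finset.sum_congr rfl fun z _ => ?_
        rw [key z, ← Fintype.sum_bijective e hbij
          (fun p => c (y₂ + ((p.1 : G) + p.2)) • b (y₁ + z + ((p.1 : G) + p.2)))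
          (fun t => c (y₂ + (t : G)) • b (y₁ + z + (t : G))) (fun p => rfl),
          Finset.smul_sum]
    _ = ∑ p : Z' × W, ∑ z : Z',
          ρ z • (c (y₂ + ((p.1 : G) + p.2)) • b (y₁ + z + ((p.1 : G) + p.2))) :=
        Finset.sum_comm
    _ = ∑ p : Z' × W, ∑ u : Z',
          (ρ p.1 * c (y₂ + ((p.1 : G) + p.2)) * ρ u) • b (y₁ + u + (p.2 : G)) := by
        refine Finset.sum_congr rfl fun p _ => ?_
        rw [← Equiv.sum_comp (Equiv.addRight p.1)
          (fun z : Z' => ρ z • (c (y₂ + ((p.1 : G) + p.2)) • b (y₁ + z + ((p.1 : G) + p.2))))]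
        refine Finset.sum_congr rfl fun u _ => ?_
        have h2p : ((p.1 : G)) + (p.1 : G) = 0 := by
          have := h2 (p.1 : G) (hZ'Z p.1.2)
          simpa [two_smul] using this
        have harg : y₁ + ((u : G) + p.1) + ((p.1 : G) + p.2) = y₁ + u + p.2 := by
          rw [show y₁ + ((u : G) + p.1) + ((p.1 : G) + p.2)
              = y₁ + u + p.2 + ((p.1 : G) + p.1) by abel, h2p, add_zero]
        simp only [Equiv.coe_addRight, AddSubgroup.coe_add, hρmul, smul_smul, harg]
        ring_nf
    _ = ∑ w : W, (∑ z' : Z', ρ z' * c (y₂ + w + z')) •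
          (∑ z : Z', ρ z • b (y₁ + w + z)) := by
        rw [Fintype.sum_prod_type_right]
        refine Finset.sum_congr rfl fun w _ => ?_
        rw [Finset.sum_smul]
        refine Finset.sum_congr rfl fun z' _ => ?_
        rw [Finset.smul_sum]
        refine Finset.sum_congr rfl fun u _ => ?_
        simp only [smul_smul]
        rw [show y₂ + ((z' : G) + w) = y₂ + w + z' by abel,
            show y₁ + (u : G) + (w : G) = y₁ + w + u by abel]
end
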